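/- arXiv:2509.24942 — 4 statements merged into one kernel-verified Lean document; each statement's English description precedes it below -/
import Mathlib

section
/- Let x, y, q be complex numbers with |q| < 1, and suppose x²y·q^k ≠ 1 for every integer k ≥ 0. Then Σ_{i,j,k≥0} q^(C(k,2)+C(i+j+k,2)) · (−1)^(i+j) · x^(2i+2k+j) · y^(2j+2k+i) / ((q;q)_i · (q;q)_j · (q;q)_k) = (x²y;q)_∞ · Σ_{k≥0} (x;q)_k · (−1)^k · q^(C(k,2)) · (xy²)^k / ((q;q)_k · (x²y;q)_k), where C(m,2) = m(m−1)/2. -/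
/-- Finite q-Pochhammer symbol `(a; q)_n = ∏_{k=0}^{n-1} (1 - a q^k)`. -/
noncomputable def qPoch (a q : ℂ) (n : ℕ) : ℂ := ∏ k ∈ Finset.range n, (1 - a * q ^ k)

/-- Infinite q-Pochhammer symbol `(a; q)_∞ = ∏_{k=0}^{∞} (1 - a q^k)`. -/
noncomputable def qPochInf (a q : ℂ) : ℂ := ∏' k : ℕ, (1 - a * q ^ k)

/-!
The right-hand side is `∑ₖ (x;q)ₖ (-1)ᵏ q^(k choose 2) (xy²)ᵏ / (q;q)ₖ · (x²yqᵏ;q)_∞`. Expanding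
`(x;q)ₖ` by the q-binomial theorem and `(x²yqᵏ;q)_∞` by Euler's series
`(z;q)_∞ = ∑ₘ (-1)ᵐ q^(m choose 2) zᵐ / (q;q)ₘ` turns it into a triple sum over `(i, j, m)` with
`k = i + j`, whose terms are exactly those of the left-hand side. The factors `q^(m choose 2)` make
everything absolutely convergent, which justifies the regrouping.
-/

open Filter Finset Topology

theorem Nat.choose_two_add (a b : ℕ) : (a + b).choose 2 = a.choose 2 + b.choose 2 + a * b := by
  induction b with
  | zero => simp
  | succ b ih =>
    rw [← add_assoc, Nat.choose_succ_succ', Nat.choose_one_right, ih, Nat.choose_succ_succ',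
      Nat.choose_one_right]
    ring

theorem tsum_eq_tsum_sum_antidiagonal {A α : Type*} [AddCommMonoid A] [HasAntidiagonal A]
    [AddCommMonoid α] [TopologicalSpace α] [ContinuousAdd α] [T3Space α] {f : A × A → α}
    (hf : Summable f) : ∑' p, f p = ∑' n, ∑ p ∈ antidiagonal n, f p := by
  let e := HasAntidiagonal.sigmaAntidiagonalEquivProd (A := A)
  rw [← e.tsum_eq]
  refine (Summable.tsum_sigma' (f := f ∘ e) (fun n ↦ (hasSum_fintype _).summable)
    (e.summable_iff.mpr hf)).trans ?_
  congr 1 with n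
  rw [tsum_fintype]
  exact Finset.sum_coe_sort _ _

theorem summable_pow_choose_two_mul_pow {r : ℝ} (hr₀ : 0 ≤ r) (hr : r < 1) (s : ℝ) :
    Summable fun n : ℕ ↦ r ^ n.choose 2 * s ^ n := by
  have hlim : Tendsto (fun n : ℕ ↦ r ^ n * ‖s‖) atTop (𝓝 0) := by
    simpa using (tendsto_pow_atTop_nhds_zero_of_lt_one hr₀ hr).mul_const ‖s‖
  refine summable_of_ratio_norm_eventually_le (r := 1 / 2) (by norm_num) ?_
  filter_upwards [hlim.eventually_le_const (by norm_num : (0 : ℝ) < 1 / 2)] with n hn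
  have hstep : r ^ (n + 1).choose 2 * s ^ (n + 1) = (r ^ n * s) * (r ^ n.choose 2 * s ^ n) := by
    rw [Nat.choose_two_add, Nat.choose_eq_zero_of_lt one_lt_two]; ring
  rw [hstep, norm_mul, norm_mul, norm_pow, Real.norm_of_nonneg hr₀]
  gcongr

section Algebraic

variable (a q : ℂ)

theorem qPoch_succ (n : ℕ) : qPoch a q (n + 1) = qPoch a q n * (1 - a * q ^ n) :=
  prod_range_succ _ _

theorem qPoch_add (k n : ℕ) : qPoch a q (k + n) = qPoch a q k * qPoch (a * q ^ k) q n := by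
  simp only [qPoch, prod_range_add, pow_add, mul_assoc]

noncomputable def eulerTerm (z : ℂ) (m : ℕ) : ℂ :=
  (-1) ^ m * q ^ m.choose 2 * z ^ m / qPoch q q m

variable {q}

theorem eulerTerm_div_qPoch_succ_mul (hq : ∀ n, qPoch q q n ≠ 0) (z : ℂ) (i j : ℕ) :
    eulerTerm q z i / qPoch q q (j + 1) * (1 - q ^ (j + 1)) = eulerTerm q z i / qPoch q q j := by
  have hj := hq (j + 1)
  rw [qPoch_succ, ← pow_succ'] at hj ⊢
  field_simp [(mul_ne_zero_iff.mp hj).2]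

theorem eulerTerm_succ_div_qPoch_mul (hq : ∀ n, qPoch q q n ≠ 0) (z : ℂ) (i j : ℕ) :
    eulerTerm q z (i + 1) / qPoch q q j * (1 - q ^ (i + 1)) =
      -(z * q ^ i) * (eulerTerm q z i / qPoch q q j) := by
  have hi := hq (i + 1)
  rw [qPoch_succ, ← pow_succ'] at hi
  simp only [eulerTerm, qPoch_succ, ← pow_succ', Nat.choose_two_add,
    Nat.choose_eq_zero_of_lt one_lt_two]
  field_simp [(mul_ne_zero_iff.mp hi).2]
  ring

/-- The q-binomial theorem, divided by `(q;q)_n`. -/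
theorem sum_antidiagonal_eulerTerm_div_qPoch (hq : ∀ n, qPoch q q n ≠ 0) (z : ℂ) (n : ℕ) :
    ∑ p ∈ antidiagonal n, eulerTerm q z p.1 / qPoch q q p.2 = qPoch z q n / qPoch q q n := by
  induction n with
  | zero => simp [eulerTerm, qPoch]
  | succ n ih =>
    have hn := hq (n + 1)
    rw [qPoch_succ, ← pow_succ'] at hn
    have hstep : (∑ p ∈ antidiagonal (n + 1), eulerTerm q z p.1 / qPoch q q p.2) *
        (1 - q ^ (n + 1)) = (∑ p ∈ antidiagonal n, eulerTerm q z p.1 / qPoch q q p.2) *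
          (1 - z * q ^ n) := by
      calc _ = ∑ p ∈ antidiagonal (n + 1), (eulerTerm q z p.1 / qPoch q q p.2 * (1 - q ^ p.2) +
              q ^ p.2 * (eulerTerm q z p.1 / qPoch q q p.2 * (1 - q ^ p.1))) := by
            rw [sum_mul]
            refine sum_congr rfl fun p hp ↦ ?_
            rw [← mem_antidiagonal.mp hp]
            ring
        _ = ∑ p ∈ antidiagonal n, eulerTerm q z p.1 / qPoch q q p.2 +
              ∑ p ∈ antidiagonal n, q ^ p.2 * (-(z * q ^ p.1) *
                (eulerTerm q z p.1 / qPoch q q p.2)) := by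
            rw [sum_add_distrib, Nat.sum_antidiagonal_succ', Nat.sum_antidiagonal_succ]
            simp only [eulerTerm_div_qPoch_succ_mul hq, eulerTerm_succ_div_qPoch_mul hq, pow_zero,
              sub_self, mul_zero, zero_add]
        _ = _ := by
            rw [mul_sub, mul_one, sub_eq_add_neg, sum_mul, ← sum_neg_distrib]
            congr 1
            refine sum_congr rfl fun p hp ↦ ?_
            rw [← mem_antidiagonal.mp hp]
            ring
    rw [qPoch_succ, qPoch_succ, ← pow_succ', ← div_mul_div_comm, ← ih, ← mul_div_assoc, ← hstep,
      mul_div_cancel_right₀ _ (mul_ne_zero_iff.mp hn).2]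

theorem norm_eulerTerm (q z : ℂ) (m : ℕ) :
    ‖eulerTerm q z m‖ = ‖q‖ ^ m.choose 2 * ‖z‖ ^ m * ‖(qPoch q q m)⁻¹‖ := by
  simp [eulerTerm, div_eq_mul_inv]

noncomputable def tripleTerm (x y q : ℂ) (t : ℕ × ℕ × ℕ) : ℂ :=
  q ^ (Nat.choose t.2.2 2 + Nat.choose (t.1 + t.2.1 + t.2.2) 2) *
    (-1 : ℂ) ^ (t.1 + t.2.1) * x ^ (2 * t.1 + 2 * t.2.2 + t.2.1) *
    y ^ (2 * t.2.1 + 2 * t.2.2 + t.1) /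
    (qPoch q q t.1 * qPoch q q t.2.1 * qPoch q q t.2.2)

theorem tripleTerm_eq (x y q : ℂ) (m j i : ℕ) :
    tripleTerm x y q (m, j, i) = eulerTerm q x i / qPoch q q j *
      ((-1) ^ (i + j) * q ^ (i + j).choose 2 * (x * y ^ 2) ^ (i + j)) *
      eulerTerm q (x ^ 2 * y * q ^ (i + j)) m := by
  have hchoose : (m + j + i).choose 2 = (i + j).choose 2 + m.choose 2 + (i + j) * m := by
    rw [show m + j + i = i + j + m by ring, Nat.choose_two_add]
  have hsign : (-1 : ℂ) ^ (m + j) = (-1) ^ i * (-1) ^ (i + j) * (-1) ^ m := by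
    rw [← pow_add, ← pow_add, show i + (i + j) + m = m + j + 2 * i by ring, pow_add _ (m + j),
      pow_mul]
    norm_num
  simp only [tripleTerm, eulerTerm, hchoose, hsign, pow_add, pow_mul, mul_pow]
  ring

end Algebraic

section Analytic

variable {q : ℂ} (hq : ‖q‖ < 1)
include hq

theorem summable_norm_mul_pow (a : ℂ) : Summable fun k : ℕ ↦ ‖a * q ^ k‖ := by
  simpa [norm_pow] using (summable_geometric_of_lt_one (norm_nonneg q) hq).mul_left ‖a‖

theorem multipliable_one_sub_mul_pow (a : ℂ) : Multipliable fun k : ℕ ↦ 1 - a * q ^ k := by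
  simpa [sub_eq_add_neg] using multipliable_one_add_of_summable (f := fun k ↦ -(a * q ^ k))
    (by simpa using summable_norm_mul_pow hq a)

theorem tendsto_qPoch_qPochInf (a : ℂ) :
    Tendsto (qPoch a q) atTop (𝓝 (qPochInf a q)) :=
  (multipliable_one_sub_mul_pow hq a).hasProd.tendsto_prod_nat

theorem qPochInf_ne_zero {a : ℂ} (ha : ∀ k : ℕ, a * q ^ k ≠ 1) : qPochInf a q ≠ 0 := by
  have h := tprod_one_add_ne_zero_of_summable (f := fun k ↦ -(a * q ^ k))
    (fun k ↦ by simpa [← sub_eq_add_neg, sub_eq_zero] using (ha k).symm)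
    (by simpa using summable_norm_mul_pow hq a)
  simpa [qPochInf, ← sub_eq_add_neg] using h

theorem qPochInf_eq_qPoch_mul (a : ℂ) (k : ℕ) :
    qPochInf a q = qPoch a q k * qPochInf (a * q ^ k) q := by
  refine tendsto_nhds_unique ((tendsto_qPoch_qPochInf hq a).comp (tendsto_add_atTop_nat k)) ?_
  simpa only [Function.comp_def, add_comm _ k, qPoch_add] using
    (tendsto_qPoch_qPochInf hq (a * q ^ k)).const_mul (qPoch a q k)

theorem self_mul_pow_ne_one (k : ℕ) : q * q ^ k ≠ 1 := by
  intro h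
  have := congrArg norm h
  rw [← pow_succ', norm_pow, norm_one] at this
  exact (pow_lt_one₀ (norm_nonneg q) hq k.succ_ne_zero).ne this

theorem qPoch_self_ne_zero (n : ℕ) : qPoch q q n ≠ 0 :=
  prod_ne_zero_iff.2 fun k _ ↦ sub_ne_zero.2 (self_mul_pow_ne_one hq k).symm

theorem exists_norm_inv_qPoch_self_le : ∃ C, ∀ n, ‖(qPoch q q n)⁻¹‖ ≤ C := by
  have hL : qPochInf q q ≠ 0 := qPochInf_ne_zero hq (self_mul_pow_ne_one hq)
  obtain ⟨C, hC⟩ := ((tendsto_qPoch_qPochInf hq q).inv₀ hL).norm.bddAbove_range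
  exact ⟨C, fun n ↦ hC ⟨n, rfl⟩⟩

/-- Euler's expansion of `(z;q)_∞`, obtained by letting `n → ∞` in the q-binomial theorem
(Tannery's theorem). -/
theorem tsum_eulerTerm (z : ℂ) : ∑' m, eulerTerm q z m = qPochInf z q := by
  obtain ⟨C, hC⟩ := exists_norm_inv_qPoch_self_le hq
  have hC₀ : 0 ≤ C := (norm_nonneg _).trans (hC 0)
  have hL : qPochInf q q ≠ 0 := qPochInf_ne_zero hq (self_mul_pow_ne_one hq)
  let g (N m : ℕ) : ℂ := if m ≤ N then eulerTerm q z m / qPoch q q (N - m) else 0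
  have hsum (N : ℕ) : ∑' m, g N m = qPoch z q N / qPoch q q N := by
    rw [tsum_eq_sum (s := range (N + 1)) fun m hm ↦ if_neg (by simpa using hm),
      ← sum_antidiagonal_eulerTerm_div_qPoch (qPoch_self_ne_zero hq),
      Nat.sum_antidiagonal_eq_sum_range_succ_mk]
    exact sum_congr rfl fun m hm ↦ if_pos (Nat.lt_succ_iff.mp (mem_range.mp hm))
  have hlim : Tendsto (fun N ↦ ∑' m, g N m) atTop (𝓝 (∑' m, eulerTerm q z m / qPochInf q q)) := by
    refine tendsto_tsum_of_dominated_convergence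
      (bound := fun m ↦ ‖q‖ ^ m.choose 2 * ‖z‖ ^ m * C * C)
      (((summable_pow_choose_two_mul_pow (norm_nonneg q) hq ‖z‖).mul_right C).mul_right C)
      (fun m ↦ ?_) (Eventually.of_forall fun N m ↦ ?_)
    · refine (tendsto_const_nhds.div ((tendsto_qPoch_qPochInf hq q).comp
        (tendsto_sub_atTop_nat m)) hL).congr' ?_
      filter_upwards [eventually_ge_atTop m] with N hN
      exact (if_pos hN).symm
    · by_cases hm : m ≤ N
      · simp only [g, if_pos hm, div_eq_mul_inv, norm_mul, norm_eulerTerm]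
        exact mul_le_mul (mul_le_mul_of_nonneg_left (hC m) (by positivity)) (hC (N - m))
          (norm_nonneg _) (mul_nonneg (by positivity) hC₀)
      · simp only [g, if_neg hm, norm_zero]
        exact mul_nonneg (mul_nonneg (by positivity) hC₀) hC₀
  rw [funext hsum, tsum_div_const] at hlim
  exact (div_left_inj' hL).mp <| tendsto_nhds_unique hlim <|
    (tendsto_qPoch_qPochInf hq z).div (tendsto_qPoch_qPochInf hq q) hL

theorem summable_tripleTerm (x y : ℂ) : Summable (tripleTerm x y q) := by
  obtain ⟨C, hC⟩ := exists_norm_inv_qPoch_self_le hq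
  have hC₀ : 0 ≤ C := (norm_nonneg _).trans (hC 0)
  set r := ‖q‖
  let u (s : ℝ) (n : ℕ) : ℝ := r ^ n.choose 2 * s ^ n
  have hu (s : ℝ) : Summable (u s) := summable_pow_choose_two_mul_pow (norm_nonneg q) hq s
  have hbound : Summable fun t : ℕ × ℕ × ℕ ↦
      u (‖x‖ ^ 2 * ‖y‖) t.1 * (u (‖x‖ * ‖y‖ ^ 2) t.2.1 * u (‖x‖ ^ 2 * ‖y‖ ^ 2) t.2.2) *
        (C * C * C) :=
    ((hu _).mul_of_nonneg ((hu _).mul_of_nonneg (hu _) (fun _ ↦ by positivity)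
      (fun _ ↦ by positivity)) (fun _ ↦ by positivity) (fun _ ↦ by positivity)).mul_right _
  refine hbound.of_norm_bounded fun ⟨m, j, i⟩ ↦ ?_
  have hexp : m.choose 2 + j.choose 2 + i.choose 2 ≤ i.choose 2 + (m + j + i).choose 2 := by
    rw [Nat.choose_two_add, Nat.choose_two_add]
    omega
  calc ‖tripleTerm x y q (m, j, i)‖
      = r ^ (i.choose 2 + (m + j + i).choose 2) * ‖x‖ ^ (2 * m + 2 * i + j) *
          ‖y‖ ^ (2 * j + 2 * i + m) *
          (‖(qPoch q q m)⁻¹‖ * ‖(qPoch q q j)⁻¹‖ * ‖(qPoch q q i)⁻¹‖) := by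
        simp only [tripleTerm, r, div_eq_mul_inv, mul_inv, norm_mul, norm_pow, norm_neg, norm_one,
          one_pow, mul_one]
    _ ≤ r ^ (m.choose 2 + j.choose 2 + i.choose 2) * ‖x‖ ^ (2 * m + 2 * i + j) *
          ‖y‖ ^ (2 * j + 2 * i + m) * (C * C * C) := by
        gcongr ?_ * _ * _ * ?_
        · exact pow_le_pow_of_le_one (norm_nonneg q) hq.le hexp
        · gcongr
          exacts [hC m, hC j, hC i]
    _ = _ := by
        simp only [u, pow_add, pow_mul, mul_pow]
        ring

theorem tsum_tripleTerm (x y : ℂ) :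
    ∑' t, tripleTerm x y q t = ∑' n : ℕ, qPoch x q n / qPoch q q n *
      ((-1) ^ n * q ^ n.choose 2 * (x * y ^ 2) ^ n) * qPochInf (x ^ 2 * y * q ^ n) q := by
  let e := Equiv.prodComm (ℕ × ℕ) ℕ
  have hT : Summable fun p ↦ tripleTerm x y q (e p) :=
    e.summable_iff.mpr (summable_tripleTerm hq x y)
  rw [← e.tsum_eq, hT.tsum_prod, tsum_eq_tsum_sum_antidiagonal hT.prod]
  congr 1 with n
  rw [← Nat.sum_antidiagonal_swap, ← sum_antidiagonal_eulerTerm_div_qPoch (qPoch_self_ne_zero hq),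
    sum_mul, sum_mul]
  refine sum_congr rfl fun ⟨i, j⟩ hp ↦ ?_
  obtain rfl := mem_antidiagonal.mp hp
  simp only [Prod.swap, e, Equiv.prodComm_apply, tripleTerm_eq, tsum_mul_left, tsum_eulerTerm hq]

end Analytic

theorem stmt_1 (x y q : ℂ) (hq : ‖q‖ < 1)
    (hxy : ∀ k : ℕ, x ^ 2 * y * q ^ k ≠ 1) :
    (∑' t : ℕ × ℕ × ℕ,
        q ^ (Nat.choose t.2.2 2 + Nat.choose (t.1 + t.2.1 + t.2.2) 2) *
          (-1 : ℂ) ^ (t.1 + t.2.1) * x ^ (2 * t.1 + 2 * t.2.2 + t.2.1) *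
          y ^ (2 * t.2.1 + 2 * t.2.2 + t.1) /
          (qPoch q q t.1 * qPoch q q t.2.1 * qPoch q q t.2.2))
      = qPochInf (x ^ 2 * y) q *
        ∑' k : ℕ,
          qPoch x q k * (-1 : ℂ) ^ k * q ^ (Nat.choose k 2) * (x * y ^ 2) ^ k /
            (qPoch q q k * qPoch (x ^ 2 * y) q k) := by
  change ∑' t, tripleTerm x y q t = _
  rw [tsum_tripleTerm hq, ← tsum_mul_left]
  congr 1 with n
  have hn : qPoch (x ^ 2 * y) q n ≠ 0 := prod_ne_zero_iff.2 fun k _ ↦ sub_ne_zero.2 (hxy k).symm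
  rw [qPochInf_eq_qPoch_mul hq (x ^ 2 * y) n]
  field_simp
end

section
/- Fix integers i, j ≥ 0 and n ≥ 0. The number of partitions λ of n into distinct odd parts with exactly i + 2j parts and with sol₂(λ) = i equals the number of pairs (μ, η) where μ is a partition with at most i parts all of which are even, η is a partition with at most j parts all of which are divisible by 4, and |μ| + |η| = n − (2i² + 4j² + 4ij − i). (In particular, the left-hand count is zero whenever n < 2i² + 4j² + 4ij − i.) -/
/-- Helper for `sol2`: `sol2Go rest prev len` scans the rest of the (increasingly
sorted) list of parts, where `prev` is the previous part and `len` is the length of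
the current maximal 2-sequence; it returns the number of maximal 2-sequences
(strings of parts with adjacent parts differing by exactly 2) of odd length. -/
def sol2Go : List ℕ → ℕ → ℕ → ℕ
  | [], _, len => len % 2
  | a :: rest, prev, len =>
      if a = prev + 2 then sol2Go rest a (len + 1)
      else len % 2 + sol2Go rest a 1

/-- `sol2 lam` is the number of maximal 2-sequences of odd length in the partition
(multiset of parts) `lam`, whose parts are listed in increasing order. -/
def sol2 (lam : Multiset ℕ) : ℕ :=
  match Multiset.sort lam (· ≤ ·) with
  | [] => 0
  | a :: rest => sol2Go rest a 1

/-!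
Write the parts of `λ` as `2b₀+1 < 2b₁+1 < ⋯ < 2bₘ₋₁+1` and put `cᵣ = bᵣ - r`. This staircase
turns `λ` into a partition `c` with `m` parts (zeros allowed) and `|λ| = 2|c| + m²`; two
consecutive parts of `λ` differ by `2` exactly when the corresponding entries of `c` are equal, so
the 2-sequences of `λ` are the blocks of equal entries of `c`, and `sol₂ λ` is the number of values
of odd multiplicity in `c`. Such a `c` is uniquely `s + 2X` with `s` a set (those values, `|s| = i`)
and `X` a multiset with `j` entries. The same staircase turns `s` into `μ = (2(sᵣ - r))ᵣ` with at
most `i` nonzero parts and `|μ| = 2|s| + i - i²`, and `η = 4X` with the zeros dropped; then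
`n = |μ| + |η| + 2i² + 4j² + 4ij - i`.
-/

namespace List

def addStaircase : List ℕ → ℕ → List ℕ
  | [], _ => []
  | a :: l, k => (a + k) :: addStaircase l (k + 1)

def subStaircase : List ℕ → ℕ → List ℕ
  | [], _ => []
  | a :: l, k => (a - k) :: subStaircase l (k + 1)

@[simp]
theorem length_subStaircase (l : List ℕ) (k : ℕ) : (l.subStaircase k).length = l.length := by
  induction l generalizing k <;> simp [subStaircase, *]

@[simp]
theorem subStaircase_addStaircase (l : List ℕ) (k : ℕ) :
    (l.addStaircase k).subStaircase k = l := by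
  induction l generalizing k <;> simp [addStaircase, subStaircase, *]

theorem addStaircase_subStaircase {l : List ℕ} {k : ℕ} (hl : l.IsChain (· < ·))
    (hk : ∀ a ∈ l.head?, k ≤ a) : (l.subStaircase k).addStaircase k = l := by
  induction l generalizing k with
  | nil => rfl
  | cons a l ih =>
    have ha : k ≤ a := hk a rfl
    rw [subStaircase, addStaircase, Nat.sub_add_cancel ha,
      ih hl.tail fun b hb => by have := hl.rel_head? hb; omega]

theorem isChain_lt_addStaircase {l : List ℕ} (hl : l.IsChain (· ≤ ·)) (k : ℕ) :
    (l.addStaircase k).IsChain (· < ·) := by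
  induction l generalizing k with
  | nil => exact .nil
  | cons a l ih =>
    refine (ih hl.tail (k + 1)).cons fun y hy => ?_
    cases l with
    | nil => simp [addStaircase] at hy
    | cons b l =>
      obtain rfl : b + (k + 1) = y := by simpa [addStaircase] using hy
      have := hl.rel_head? rfl
      omega

theorem isChain_le_subStaircase {l : List ℕ} {k : ℕ} (hl : l.IsChain (· < ·))
    (hk : ∀ a ∈ l.head?, k ≤ a) : (l.subStaircase k).IsChain (· ≤ ·) := by
  induction l generalizing k with
  | nil => exact .nil
  | cons a l ih =>
    have ha : k ≤ a := hk a rfl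
    refine (ih hl.tail fun b hb => by have := hl.rel_head? hb; omega).cons fun y hy => ?_
    cases l with
    | nil => simp [subStaircase] at hy
    | cons b l =>
      obtain rfl : b - (k + 1) = y := by simpa [subStaircase] using hy
      have := hl.rel_head? rfl
      omega

theorem sum_addStaircase (l : List ℕ) (k : ℕ) :
    2 * (l.addStaircase k).sum + l.length = 2 * l.sum + l.length * (2 * k + l.length) := by
  induction l generalizing k with
  | nil => simp [addStaircase]
  | cons a l ih =>
    simp only [addStaircase, sum_cons, length_cons]
    linarith [ih (k + 1)]

end List

theorem Multiset.sort_coe_of_pairwise {α : Type*} [LinearOrder α] {l : List α}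
    (hl : l.Pairwise (· ≤ ·)) : Multiset.sort (l : Multiset α) = l :=
  List.mergeSort_eq_self _ hl

def staircase : Finset ℕ ≃ Multiset ℕ where
  toFun s := s.sort.subStaircase 0
  invFun c := (c.sort.addStaircase 0).toFinset
  left_inv s := by
    have hs : s.sort.IsChain (· < ·) := List.isChain_iff_pairwise.2 s.sortedLT_sort.pairwise
    have hsub := List.isChain_le_subStaircase hs (k := 0) fun _ _ => Nat.zero_le _
    dsimp only
    rw [Multiset.sort_coe_of_pairwise (List.isChain_iff_pairwise.1 hsub),
      List.addStaircase_subStaircase hs fun _ _ => Nat.zero_le _, Finset.sort_toFinset]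
  right_inv c := by
    have hadd := List.isChain_lt_addStaircase
      (List.isChain_iff_pairwise.2 (Multiset.pairwise_sort c (· ≤ ·))) 0
    have hlt := List.isChain_iff_pairwise.1 hadd
    dsimp only
    rw [(List.toFinset_sort _ hlt.nodup).2 (hlt.imp le_of_lt), List.subStaircase_addStaircase,
      Multiset.sort_eq]

theorem staircase_apply (s : Finset ℕ) : staircase s = s.sort.subStaircase 0 := rfl

@[simp]
theorem card_staircase (s : Finset ℕ) : Multiset.card (staircase s) = s.card := by
  simp [staircase_apply]

@[simp]
theorem card_staircase_symm (c : Multiset ℕ) : (staircase.symm c).card = Multiset.card c := by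
  simpa using (card_staircase (staircase.symm c)).symm

theorem two_mul_sum_add_card_eq (s : Finset ℕ) :
    2 * ∑ x ∈ s, x + s.card = 2 * (staircase s).sum + s.card ^ 2 := by
  have hs : s.sort.IsChain (· < ·) := List.isChain_iff_pairwise.2 s.sortedLT_sort.pairwise
  have h := List.sum_addStaircase (s.sort.subStaircase 0) 0
  rw [List.addStaircase_subStaircase hs fun _ _ => Nat.zero_le _] at h
  have hsum : s.sort.sum = ∑ x ∈ s, x := by
    rw [← Multiset.sum_coe, Finset.sort_eq, Finset.sum_val]; rfl
  simp only [List.length_subStaircase, Finset.length_sort, hsum] at h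
  rw [staircase_apply, Multiset.sum_coe]
  linarith

namespace Multiset

variable {α : Type*} [DecidableEq α]

def oddMultSet (c : Multiset α) : Finset α := c.toFinset.filter fun a => Odd (c.count a)

@[simp]
theorem mem_oddMultSet {c : Multiset α} {a : α} : a ∈ c.oddMultSet ↔ Odd (c.count a) := by
  simp only [oddMultSet, Finset.mem_filter, mem_toFinset, and_iff_right_iff_imp]
  exact fun h => count_pos.1 h.pos

@[simp]
theorem oddMultSet_zero : (0 : Multiset α).oddMultSet = ∅ := rfl

theorem card_oddMultSet_replicate_add {a : α} {c : Multiset α} (ha : a ∉ c) (n : ℕ) :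
    (replicate n a + c).oddMultSet.card = n % 2 + c.oddMultSet.card := by
  have hc : c.count a = 0 := count_eq_zero.2 ha
  rcases Nat.even_or_odd n with hn | hn
  · have : (replicate n a + c).oddMultSet = c.oddMultSet := by
      ext b
      by_cases hb : a = b
      · subst hb; simp [hc, hn]
      · simp [count_replicate, hb]
    rw [this, Nat.even_iff.1 hn, zero_add]
  · have : (replicate n a + c).oddMultSet = insert a c.oddMultSet := by
      ext b
      by_cases hb : a = b
      · subst hb; simp [hc, hn]
      · simp [count_replicate, hb, Ne.symm hb]
    rw [this, Finset.card_insert_of_notMem (by simp [hc]), Nat.odd_iff.1 hn, add_comm]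

theorem oddMultSet_val_add_two_nsmul (s : Finset α) (X : Multiset α) :
    (s.val + 2 • X).oddMultSet = s := by
  ext a
  by_cases ha : a ∈ s <;> simp [count_eq_of_nodup s.nodup, ha, parity_simps]

theorem bijective_val_add_two_nsmul :
    Function.Bijective fun p : Finset α × Multiset α => p.1.val + 2 • p.2 := by
  constructor
  · rintro ⟨s, X⟩ ⟨s', X'⟩ h
    dsimp only at h
    obtain rfl : s = s' := by simpa [oddMultSet_val_add_two_nsmul] using congrArg oddMultSet h
    refine Prod.ext rfl (ext.2 fun a => ?_)
    simpa using congrArg (count a) (add_left_cancel h)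
  · intro c
    refine ⟨(c.oddMultSet, ∑ a ∈ c.toFinset, replicate (c.count a / 2) a), ?_⟩
    ext a
    by_cases ha : a ∈ c <;>
      simp [count_eq_of_nodup (Finset.nodup _), count_sum', count_replicate, ha, Nat.odd_iff]
    split_ifs <;> omega

end Multiset

def oddParts (T : Finset ℕ) : Multiset ℕ := T.val.map (2 * · + 1)

theorem oddParts_injective : Function.Injective oddParts :=
  (Multiset.map_injective fun a b h => by simpa using h).comp Finset.val_injective

theorem exists_oddParts_eq {lam : Multiset ℕ} (hodd : ∀ p ∈ lam, Odd p) (hnd : lam.Nodup) :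
    ∃ T, oddParts T = lam := by
  have hmap : (lam.map (· / 2)).map (2 * · + 1) = lam := by
    rw [Multiset.map_map]
    refine (Multiset.map_congr rfl fun p hp => ?_).trans lam.map_id
    obtain ⟨k, rfl⟩ := hodd p hp
    simp only [Function.comp_apply, id]
    omega
  refine ⟨⟨lam.map (· / 2), ?_⟩, hmap⟩
  exact Multiset.Nodup.of_map (2 * · + 1) (by rwa [hmap])

@[simp]
theorem card_oddParts (T : Finset ℕ) : Multiset.card (oddParts T) = T.card := by
  simp [oddParts]

theorem sum_oddParts (T : Finset ℕ) : (oddParts T).sum = 2 * ∑ x ∈ T, x + T.card := by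
  simp [oddParts, Finset.sum_add_distrib, Finset.mul_sum]

theorem odd_of_mem_oddParts {T : Finset ℕ} {p : ℕ} (hp : p ∈ oddParts T) : Odd p := by
  obtain ⟨k, -, rfl⟩ := Multiset.mem_map.1 hp
  exact odd_two_mul_add_one k

theorem nodup_oddParts (T : Finset ℕ) : (oddParts T).Nodup :=
  T.nodup.map fun a b h => by simpa using h

theorem sort_oddParts (T : Finset ℕ) : (oddParts T).sort = T.sort.map (2 * · + 1) :=
  (Multiset.map_sort _ _ _ _ fun a _ b _ => by omega).symm

/-- The run of length `len` that `sol2Go` is scanning becomes `len` copies of `a - k`: since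
`2b + 1 = (2a + 1) + 2` iff `b - (k + 1) = a - k`, each 2-sequence becomes a block of equal
entries. -/
theorem sol2Go_map_two_mul_add_one {a k : ℕ} {l : List ℕ} (hl : (a :: l).IsChain (· < ·))
    (hk : k ≤ a) (len : ℕ) :
    sol2Go (l.map (2 * · + 1)) (2 * a + 1) len =
      (Multiset.replicate len (a - k) +
        (l.subStaircase (k + 1) : Multiset ℕ)).oddMultSet.card := by
  induction l generalizing a k len with
  | nil =>
    simpa [sol2Go, List.subStaircase] using
      (Multiset.card_oddMultSet_replicate_add (Multiset.notMem_zero (a - k)) len).symm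
  | cons b l ih =>
    have hab : a < b := hl.rel_head? rfl
    have ih' := ih hl.tail (k := k + 1) (by omega)
    simp only [List.map_cons, sol2Go, List.subStaircase]
    by_cases hb : b = a + 1
    · subst hb
      rw [if_pos (by omega), ih' (len + 1), show a + 1 - (k + 1) = a - k by omega,
        Multiset.replicate_succ, ← Multiset.cons_coe, Multiset.add_cons, Multiset.cons_add]
    · have hsorted : ((b - (k + 1)) :: l.subStaircase (k + 2)).Pairwise (· ≤ ·) :=
        List.isChain_iff_pairwise.1 <| List.isChain_le_subStaircase hl.tail
        (k := k + 1) fun c hc => by obtain rfl : b = c := (by simpa using hc); omega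
      rw [if_neg (by omega), ih' 1, Multiset.card_oddMultSet_replicate_add (a := a - k)]
      · rw [Multiset.replicate_one, Multiset.singleton_add, Multiset.cons_coe]
      · rw [Multiset.mem_coe, List.mem_cons]
        rintro (h | h)
        · omega
        · have := (List.pairwise_cons.1 hsorted).1 _ h
          omega

theorem sol2_oddParts (T : Finset ℕ) : sol2 (oddParts T) = (staircase T).oddMultSet.card := by
  have hT : T.sort.IsChain (· < ·) := List.isChain_iff_pairwise.2 T.sortedLT_sort.pairwise
  rw [sol2, sort_oddParts, staircase_apply]
  cases h : T.sort with
  | nil => rfl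
  | cons a l =>
    rw [h] at hT
    rw [List.map_cons]
    dsimp only
    rw [sol2Go_map_two_mul_add_one hT (Nat.zero_le a), Multiset.replicate_one,
      Multiset.singleton_add, Multiset.cons_coe]
    rfl

namespace Multiset

def scalePositive (d : ℕ) (X : Multiset ℕ) : Multiset ℕ := (X.filter (0 < ·)).map (d * ·)

theorem sum_scalePositive (d : ℕ) (X : Multiset ℕ) : (X.scalePositive d).sum = d * X.sum := by
  have hzero : (X.filter fun x => ¬0 < x).sum = 0 :=
    sum_eq_zero fun x hx => by have := (mem_filter.1 hx).2; omega
  have hsplit := congrArg sum (X.filter_add_not (0 < ·))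
  rw [sum_add, hzero, add_zero] at hsplit
  rw [scalePositive, sum_map_mul_left, map_id', hsplit]

theorem filter_pos_add_replicate_zero (X : Multiset ℕ) :
    X.filter (0 < ·) + replicate (card X - card (X.filter (0 < ·))) 0 = X := by
  conv_rhs => rw [← X.filter_add_not (0 < ·)]
  congr 1
  refine (eq_replicate.2 ⟨?_, fun b hb => by have := (mem_filter.1 hb).2; omega⟩).symm
  have := congrArg card (X.filter_add_not (0 < ·))
  rw [card_add] at this
  omega

theorem bijOn_scalePositive {d : ℕ} (hd : 0 < d) (k : ℕ) :
    Set.BijOn (scalePositive d) {X | card X = k}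
      {μ | (∀ x ∈ μ, 0 < x ∧ d ∣ x) ∧ card μ ≤ k} := by
  refine Set.InvOn.bijOn (f' := fun μ => μ.map (· / d) + replicate (k - card μ) 0)
    ⟨fun X hX => ?_, fun μ hμ => ?_⟩ (fun X hX => ?_) (fun μ hμ => ?_)
  · have hdiv : ((X.filter (0 < ·)).map (d * ·)).map (· / d) = X.filter (0 < ·) := by
      rw [map_map]
      exact (map_congr rfl fun x _ => by simp [hd.ne']).trans (map_id _)
    simp only [scalePositive, hdiv, card_map]
    rw [← hX, filter_pos_add_replicate_zero]
  · have hpos : ∀ x ∈ μ.map (· / d), 0 < x := by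
      simp only [mem_map]
      rintro _ ⟨x, hx, rfl⟩
      obtain ⟨hx, c, rfl⟩ := hμ.1 x hx
      rw [Nat.mul_div_cancel_left c hd]
      exact Nat.pos_of_mul_pos_left hx
    have hzero : (replicate (k - card μ) 0).filter (0 < ·) = 0 :=
      filter_eq_nil.2 fun x hx => by rw [eq_of_mem_replicate hx]; exact lt_irrefl 0
    rw [scalePositive, filter_add, filter_eq_self.2 hpos, hzero, add_zero, map_map]
    exact (map_congr rfl fun x hx => Nat.mul_div_cancel' (hμ.1 x hx).2).trans (map_id _)
  · refine ⟨fun x hx => ?_, ?_⟩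
    · obtain ⟨y, hy, rfl⟩ := mem_map.1 hx
      exact ⟨Nat.mul_pos hd (mem_filter.1 hy).2, dvd_mul_right d y⟩
    · rw [← (hX : card X = k), scalePositive, card_map]
      exact card_le_card (filter_le _ _)
  · have := hμ.2
    simp only [Set.mem_ofPred_eq, card_add, card_map, card_replicate]
    omega

end Multiset

theorem Set.BijOn.natCard_subtype_eq {α β : Type*} {f : α → β} {s : Set α} {t : Set β}
    (h : Set.BijOn f s t) {P : α → Prop} {Q : β → Prop} (hPQ : ∀ a ∈ s, Q (f a) ↔ P a) :
    Nat.card {a // a ∈ s ∧ P a} = Nat.card {b // b ∈ t ∧ Q b} := by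
  refine Nat.card_congr
    (Set.BijOn.equiv f (s := {a | a ∈ s ∧ P a}) (t := {b | b ∈ t ∧ Q b}) ?_)
  refine ⟨fun a ha => ⟨h.mapsTo ha.1, (hPQ a ha.1).2 ha.2⟩, h.injOn.mono fun a ha => ha.1,
    fun b hb => ?_⟩
  obtain ⟨a, ha, rfl⟩ := h.surjOn hb.1
  exact ⟨a, ⟨ha, (hPQ a ha).1 hb.2⟩, rfl⟩

theorem Nat.card_subtype_eq_card_subtype_comp {α β : Type*} {f : α → β}
    (hf : Function.Injective f) {P : β → Prop} (hP : ∀ b, P b → b ∈ Set.range f) :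
    Nat.card {b // P b} = Nat.card {a // P (f a)} := by
  refine (Nat.card_congr
    (Equiv.ofBijective (fun a => ⟨f a.1, a.2⟩) ⟨fun a b h => ?_, ?_⟩)).symm
  · exact Subtype.ext (hf (congrArg Subtype.val h))
  · rintro ⟨b, hb⟩
    obtain ⟨a, rfl⟩ := hP b hb
    exact ⟨⟨a, hb⟩, rfl⟩

theorem card_distinctOddParts_eq_card_oddMultSet (m i n : ℕ) :
    Nat.card {lam : Multiset ℕ // lam.sum = n ∧ (∀ p ∈ lam, Odd p) ∧ lam.Nodup ∧
        Multiset.card lam = m ∧ sol2 lam = i} =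
      Nat.card {c : Multiset ℕ //
        Multiset.card c = m ∧ c.oddMultSet.card = i ∧ 2 * c.sum + m ^ 2 = n} := by
  rw [Nat.card_subtype_eq_card_subtype_comp (oddParts_injective.comp staircase.symm.injective)]
  · refine Nat.card_congr (Equiv.subtypeEquivRight fun c => ?_)
    have hsum := two_mul_sum_add_card_eq (staircase.symm c)
    rw [Equiv.apply_symm_apply, card_staircase_symm] at hsum
    rw [Function.comp_apply, sum_oddParts, card_oddParts, sol2_oddParts, Equiv.apply_symm_apply,
      card_staircase_symm]
    constructor
    · rintro ⟨h₁, -, -, rfl, h₃⟩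
      exact ⟨rfl, h₃, by omega⟩
    · rintro ⟨rfl, h₂, h₃⟩
      exact ⟨by omega, fun _ => odd_of_mem_oddParts, nodup_oddParts _, rfl, h₂⟩
  · rintro lam ⟨-, hodd, hnd, -⟩
    obtain ⟨T, rfl⟩ := exists_oddParts_eq hodd hnd
    exact ⟨staircase T, by simp⟩

theorem card_oddMultSet_eq_card_finset_prod (i j n : ℕ) :
    Nat.card {c : Multiset ℕ // Multiset.card c = i + 2 * j ∧ c.oddMultSet.card = i ∧
        2 * c.sum + (i + 2 * j) ^ 2 = n} =
      Nat.card {p : Finset ℕ × Multiset ℕ //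
        p ∈ {s | s.card = i} ×ˢ {X | Multiset.card X = j} ∧
        2 * (∑ x ∈ p.1, x + 2 * p.2.sum) + (i + 2 * j) ^ 2 = n} := by
  rw [Nat.card_subtype_eq_card_subtype_comp Multiset.bijective_val_add_two_nsmul.injective
    fun c _ => Multiset.bijective_val_add_two_nsmul.surjective c]
  refine Nat.card_congr (Equiv.subtypeEquivRight fun ⟨s, X⟩ => ?_)
  simp only [Multiset.card_add, Multiset.card_nsmul, Finset.card_val,
    Multiset.oddMultSet_val_add_two_nsmul, Multiset.sum_add, Multiset.sum_nsmul, Finset.sum_val,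
    Set.mem_prod, Set.mem_ofPred_eq, smul_eq_mul]
  constructor
  · rintro ⟨h₁, rfl, h₃⟩
    exact ⟨⟨rfl, by omega⟩, h₃⟩
  · rintro ⟨⟨rfl, rfl⟩, h₃⟩
    exact ⟨rfl, rfl, h₃⟩

theorem card_finset_prod_eq_card_multiples_prod (i j n : ℕ) :
    Nat.card {p : Finset ℕ × Multiset ℕ //
        p ∈ {s | s.card = i} ×ˢ {X | Multiset.card X = j} ∧
        2 * (∑ x ∈ p.1, x + 2 * p.2.sum) + (i + 2 * j) ^ 2 = n} =
      Nat.card {p : Multiset ℕ × Multiset ℕ //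
          (∀ x ∈ p.1, 0 < x ∧ 2 ∣ x) ∧ Multiset.card p.1 ≤ i ∧
          (∀ x ∈ p.2, 0 < x ∧ 4 ∣ x) ∧ Multiset.card p.2 ≤ j ∧
          p.1.sum + p.2.sum + (2 * i ^ 2 + 4 * j ^ 2 + 4 * i * j - i) = n} := by
  have hstair : Set.BijOn staircase {s | s.card = i} {c | Multiset.card c = i} :=
    staircase.bijOn fun s => by simp
  have hbij := ((Multiset.bijOn_scalePositive two_pos i).comp hstair).prodMap
    (Multiset.bijOn_scalePositive four_pos j)
  refine (hbij.natCard_subtype_eq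
    (Q := fun p => p.1.sum + p.2.sum + (2 * i ^ 2 + 4 * j ^ 2 + 4 * i * j - i) = n) ?_).trans
    (Nat.card_congr (Equiv.subtypeEquivRight fun p => ?_))
  · rintro ⟨s, X⟩ ⟨hs, hX⟩
    have hsum := two_mul_sum_add_card_eq s
    simp only [Function.comp_apply, Multiset.sum_scalePositive]
    rw [(hs : s.card = i)] at hsum
    have hsq : i ≤ i ^ 2 := Nat.le_self_pow two_ne_zero i
    have hexp : (i + 2 * j) ^ 2 = i ^ 2 + 4 * i * j + 4 * j ^ 2 := by ring
    omega
  · simp only [Set.mem_prod, Set.mem_ofPred_eq, and_assoc]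

theorem stmt_17 (i j n : ℕ) :
    Nat.card {lam : Multiset ℕ //
        lam.sum = n ∧ (∀ p ∈ lam, Odd p) ∧ lam.Nodup ∧
        Multiset.card lam = i + 2 * j ∧ sol2 lam = i}
      = Nat.card {p : Multiset ℕ × Multiset ℕ //
          (∀ x ∈ p.1, 0 < x ∧ 2 ∣ x) ∧ Multiset.card p.1 ≤ i ∧
          (∀ x ∈ p.2, 0 < x ∧ 4 ∣ x) ∧ Multiset.card p.2 ≤ j ∧
          p.1.sum + p.2.sum + (2 * i ^ 2 + 4 * j ^ 2 + 4 * i * j - i) = n} := by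
  rw [card_distinctOddParts_eq_card_oddMultSet, card_oddMultSet_eq_card_finset_prod,
    card_finset_prod_eq_card_multiples_prod]
end

section
/- Fix integers i ≥ 0 and n ≥ 0. The number of pairs (λ, μ) where λ is a partition with exactly i parts, all parts of λ odd, μ is a partition into distinct even parts with every part at least 2i + 2, and |λ| + |μ| = n, equals the number of pairs (β, γ) where β is a partition with exactly i parts, all parts of β congruent to 1 modulo 4, γ is a partition into distinct even parts, and |β| + |γ| = n. -/
/-!
Write the odd parts as `2 y + 1` and the parts `≡ 1 mod 4` as `4 y + 1`. A multiset of `i`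
naturals `y` is determined by its gaps `a : Fin i → ℕ`, and `∑ y = ∑ m, (m + 1) * a m`.
Splitting every gap of an odd partition as `a m = 2 b m + s m` with a bit `s m`, its size becomes
`(i + 4 ∑ (m + 1) b m) + ∑_{s m = 1} 2 (m + 1)`: the first term is the size of the partition into
parts `≡ 1 mod 4` with gaps `b`, the second the sum of a set of distinct even numbers `≤ 2 i`.
Adjoining these to the distinct even parts `≥ 2 i + 2` gives an arbitrary partition into
distinct even parts.
-/

open Finset

namespace Multiset

/-- `ofGaps a` has the elements `a m + a (m + 1) + ⋯ + a (i - 1)` for `m < i`. -/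
def ofGaps : {i : ℕ} → (Fin i → ℕ) → Multiset ℕ
  | 0, _ => 0
  | _ + 1, a => a (Fin.last _) ::ₘ (ofGaps (Fin.init a)).map (· + a (Fin.last _))

@[simp]
theorem card_ofGaps {i : ℕ} (a : Fin i → ℕ) : card (ofGaps a) = i := by
  induction i with
  | zero => rfl
  | succ i ih => simp [ofGaps, ih]

theorem sum_ofGaps {i : ℕ} (a : Fin i → ℕ) : (ofGaps a).sum = ∑ m, (m + 1) * a m := by
  induction i with
  | zero => rfl
  | succ i ih =>
    simp only [ofGaps, sum_cons, sum_map_add, map_id', ih, map_const', sum_replicate,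
      card_ofGaps, smul_eq_mul, Fin.sum_univ_castSucc, Fin.init, Fin.val_castSucc, Fin.val_last]
    ring

theorem le_of_mem_ofGaps {i : ℕ} (a : Fin (i + 1) → ℕ) {x : ℕ} (hx : x ∈ ofGaps a) :
    a (Fin.last i) ≤ x := by
  simp only [ofGaps, mem_cons, mem_map] at hx
  rcases hx with rfl | ⟨y, -, rfl⟩ <;> omega

theorem ofGaps_injective (i : ℕ) : Function.Injective (ofGaps (i := i)) := by
  induction i with
  | zero => intro a b _; exact Subsingleton.elim a b
  | succ i ih =>
    intro a b hab
    have hlast : a (Fin.last i) = b (Fin.last i) :=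
      le_antisymm (le_of_mem_ofGaps a (hab ▸ by simp [ofGaps]))
        (le_of_mem_ofGaps b (hab.symm ▸ by simp [ofGaps]))
    simp only [ofGaps, hlast, cons_inj_right] at hab
    have hinit := ih (map_injective (add_left_injective _) hab)
    rw [← Fin.snoc_init_self a, ← Fin.snoc_init_self b, hinit, hlast]

theorem exists_ofGaps_eq {i : ℕ} {s : Multiset ℕ} (hs : card s = i) :
    ∃ a : Fin i → ℕ, ofGaps a = s := by
  induction i generalizing s with
  | zero => exact ⟨Fin.elim0, (card_eq_zero.mp hs).symm⟩
  | succ i ih =>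
    obtain ⟨c, hc, hmin⟩ := s.toFinset.exists_min_image id
      (toFinset_nonempty.mpr (by rintro rfl; simp at hs))
    simp only [mem_toFinset, id] at hc hmin
    obtain ⟨a, ha⟩ := ih (s := (s.erase c).map (· - c)) (by simp [card_erase_of_mem hc, hs])
    refine ⟨Fin.snoc a c, ?_⟩
    have hshift : ((s.erase c).map (· - c)).map (· + c) = s.erase c := by
      rw [map_map]
      refine (map_congr rfl fun x hx => ?_).trans (map_id _)
      have := hmin x (mem_of_mem_erase hx)
      simp only [Function.comp, id]
      omega
    simp only [ofGaps, Fin.init_snoc, Fin.snoc_last, ha, hshift, cons_erase hc]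

noncomputable def gapsEquiv (i : ℕ) : (Fin i → ℕ) ≃ {s : Multiset ℕ // card s = i} :=
  Equiv.ofBijective (fun a => ⟨ofGaps a, card_ofGaps a⟩)
    ⟨fun _ _ h => ofGaps_injective i (congrArg Subtype.val h),
      fun s => (exists_ofGaps_eq s.2).imp fun _ ha => Subtype.ext ha⟩

@[simp]
theorem coe_gapsEquiv {i : ℕ} (a : Fin i → ℕ) : (gapsEquiv i a).1 = ofGaps a := rfl

def mulAddEquiv (i : ℕ) {c r : ℕ} (hrc : r < c) :
    {s : Multiset ℕ // card s = i} ≃ {t : Multiset ℕ // card t = i ∧ ∀ x ∈ t, x % c = r} where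
  toFun s := ⟨s.1.map (c * · + r), by simp [s.2], by simp [Nat.mod_eq_of_lt hrc]⟩
  invFun t := ⟨t.1.map (· / c), by simp [t.2.1]⟩
  left_inv s := by
    ext1
    simp only [map_map, Function.comp_def, Nat.mul_add_div (by omega : 0 < c),
      Nat.div_eq_of_lt hrc, add_zero, map_id']
  right_inv t := by
    ext1
    refine (map_map _ _ _).trans ((map_congr rfl fun x hx => ?_).trans (map_id _))
    have := Nat.div_add_mod x c
    simp only [Function.comp, id, t.2.2 x hx] at this ⊢
    exact this

theorem sum_mulAddEquiv (i : ℕ) {c r : ℕ} (hrc : r < c) (s : {s : Multiset ℕ // card s = i}) :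
    (mulAddEquiv i hrc s).1.sum = c * s.1.sum + i * r := by
  have hmul : (s.1.map (c * ·)).sum = c * s.1.sum := by
    simpa using sum_map_mul_left (f := id) (a := c) (s := s.1)
  rw [mulAddEquiv, Equiv.coe_fn_mk, sum_map_add, hmul, map_const', sum_replicate, smul_eq_mul, s.2]

end Multiset

def subtypeProdAndEquiv {α β : Type*} {P₁ P₂ : α → Prop} {Q₁ Q₂ : β → Prop} {R : α → β → Prop} :
    {p : α × β // P₁ p.1 ∧ P₂ p.1 ∧ Q₁ p.2 ∧ Q₂ p.2 ∧ R p.1 p.2} ≃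
      {q : {a // P₁ a ∧ P₂ a} × {b // Q₁ b ∧ Q₂ b} // R q.1 q.2} where
  toFun p := ⟨(⟨p.1.1, p.2.1, p.2.2.1⟩, ⟨p.1.2, p.2.2.2.1, p.2.2.2.2.1⟩), p.2.2.2.2.2⟩
  invFun q := ⟨(q.1.1.1, q.1.2.1), q.1.1.2.1, q.1.1.2.2, q.1.2.2.1, q.1.2.2.2, q.2⟩

def bitsEquiv (ι : Type*) : (ι → ℕ) × (ι → Bool) ≃ (ι → ℕ) :=
  (Equiv.arrowProdEquivProdArrow _ _ _).symm.trans
    (Equiv.piCongrRight fun _ => (Equiv.prodComm _ _).trans Equiv.boolProdNatEquivNat)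

theorem bitsEquiv_apply {ι : Type*} (b : ι → ℕ) (s : ι → Bool) (m : ι) :
    bitsEquiv ι (b, s) m = 2 * b m + (s m).toNat := by
  simp [bitsEquiv, Nat.bit_val]

namespace OddModFour

open Multiset

variable (i : ℕ)

abbrev OddParts := {l : Multiset ℕ // card l = i ∧ ∀ x ∈ l, Odd x}
abbrev ModFourParts := {l : Multiset ℕ // card l = i ∧ ∀ x ∈ l, x % 4 = 1}
abbrev LargeDistinctEvens := {μ : Multiset ℕ // (∀ x ∈ μ, 0 < x ∧ 2 ∣ x ∧ 2 * i + 2 ≤ x) ∧ μ.Nodup}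
abbrev DistinctEvens := {γ : Multiset ℕ // (∀ x ∈ γ, 0 < x ∧ 2 ∣ x) ∧ γ.Nodup}

def smallEvens (s : Fin i → Bool) : Multiset ℕ :=
  (univ.filter (s ·)).val.map fun m : Fin i => 2 * (m + 1)

variable {i}

theorem mem_smallEvens {s : Fin i → Bool} {x : ℕ} :
    x ∈ smallEvens i s ↔ ∃ m, s m ∧ 2 * ((m : ℕ) + 1) = x := by
  simp [smallEvens]

theorem twiceSucc_mem_smallEvens {s : Fin i → Bool} (m : Fin i) :
    2 * ((m : ℕ) + 1) ∈ smallEvens i s ↔ s m := by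
  refine mem_smallEvens.trans ⟨fun ⟨m', hm', he⟩ => ?_, fun h => ⟨m, h, rfl⟩⟩
  rwa [show m' = m from Fin.ext (by omega)] at hm'

theorem nodup_smallEvens (s : Fin i → Bool) : (smallEvens i s).Nodup :=
  (Finset.nodup _).map fun a b h => Fin.ext (by omega)

theorem sum_smallEvens (s : Fin i → Bool) :
    (smallEvens i s).sum = ∑ m, (s m).toNat * (2 * (m + 1)) := by
  rw [smallEvens, Finset.sum_map_val, Finset.sum_filter]
  refine Finset.sum_congr rfl fun m _ => ?_
  cases s m <;> simp

theorem lt_of_mem_smallEvens {s : Fin i → Bool} {x : ℕ} (hx : x ∈ smallEvens i s) :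
    x < 2 * i + 2 := by
  obtain ⟨m, -, rfl⟩ := mem_smallEvens.mp hx
  omega

theorem smallEvens_eq_filter (γ : DistinctEvens) :
    smallEvens i (fun m => 2 * ((m : ℕ) + 1) ∈ γ.1) = γ.1.filter (¬ 2 * i + 2 ≤ ·) := by
  refine (Nodup.ext (nodup_smallEvens _) (γ.2.2.filter _)).mpr fun x => ?_
  rw [mem_smallEvens, Multiset.mem_filter]
  constructor
  · rintro ⟨m, hm, rfl⟩
    exact ⟨by simpa using hm, by omega⟩
  · rintro ⟨hx, hlt⟩
    obtain ⟨hpos, k, rfl⟩ := γ.2.1 x hx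
    refine ⟨⟨k - 1, by omega⟩, ?_, by simp; omega⟩
    simpa [show k - 1 + 1 = k by omega] using hx

variable (i) in
def evenSplitEquiv : (Fin i → Bool) × LargeDistinctEvens i ≃ DistinctEvens where
  toFun q := ⟨smallEvens i q.1 + q.2.1, by
    refine ⟨fun x hx => ?_, ?_⟩
    · rcases mem_add.mp hx with hx | hx
      · obtain ⟨m, -, rfl⟩ := mem_smallEvens.mp hx
        exact ⟨by omega, dvd_mul_right _ _⟩
      · exact ⟨(q.2.2.1 x hx).1, (q.2.2.1 x hx).2.1⟩
    · refine nodup_add.mpr ⟨nodup_smallEvens _, q.2.2.2, disjoint_left.mpr fun hx hx' => ?_⟩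
      have := lt_of_mem_smallEvens hx
      have := (q.2.2.1 _ hx').2.2
      omega⟩
  invFun γ := (fun m => 2 * ((m : ℕ) + 1) ∈ γ.1,
    ⟨γ.1.filter (2 * i + 2 ≤ ·), fun x hx => by
      rw [Multiset.mem_filter] at hx
      exact ⟨(γ.2.1 x hx.1).1, (γ.2.1 x hx.1).2, hx.2⟩, γ.2.2.filter _⟩)
  left_inv q := by
    obtain ⟨s, μ, hμ, -⟩ := q
    have hsmall : ∀ x ∈ μ, 2 * i + 2 ≤ x := fun x hx => (hμ x hx).2.2
    refine Prod.ext (funext fun m => ?_) (Subtype.ext ?_)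
    · have : 2 * ((m : ℕ) + 1) ∉ μ := fun h => by have := hsmall _ h; omega
      simp [twiceSucc_mem_smallEvens, this]
    · simp only [filter_add, filter_eq_self.mpr hsmall, add_eq_right, filter_eq_nil]
      exact fun x hx => by have := lt_of_mem_smallEvens hx; omega
  right_inv γ := Subtype.ext <| by
    simp only
    rw [smallEvens_eq_filter, add_comm, filter_add_not]

variable (i) in
noncomputable def modFourEquiv : (Fin i → ℕ) ≃ ModFourParts i :=
  (gapsEquiv i).trans (mulAddEquiv i (by norm_num : 1 < 4))

variable (i) in
noncomputable def oddEquiv : (Fin i → ℕ) × (Fin i → Bool) ≃ OddParts i :=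
  (bitsEquiv (Fin i)).trans ((gapsEquiv i).trans ((mulAddEquiv i (by norm_num : 1 < 2)).trans
    (Equiv.subtypeEquivRight fun _ => by simp only [Nat.odd_iff])))

theorem sum_modFourEquiv (b : Fin i → ℕ) :
    (modFourEquiv i b).1.sum = 4 * ∑ m, (m + 1) * b m + i := by
  rw [modFourEquiv, Equiv.trans_apply, sum_mulAddEquiv, coe_gapsEquiv, sum_ofGaps, mul_one]

theorem sum_oddEquiv (b : Fin i → ℕ) (s : Fin i → Bool) :
    (oddEquiv i (b, s)).1.sum = (modFourEquiv i b).1.sum + (smallEvens i s).sum := by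
  simp only [oddEquiv, Equiv.trans_apply, Equiv.subtypeEquivRight_apply_coe, sum_mulAddEquiv,
    coe_gapsEquiv, sum_ofGaps, bitsEquiv_apply, sum_modFourEquiv, sum_smallEvens, mul_one]
  rw [add_right_comm, Finset.mul_sum, Finset.mul_sum, ← Finset.sum_add_distrib]
  congr 1
  refine Finset.sum_congr rfl fun m _ => ?_
  ring

variable (i) in
noncomputable def pairEquiv : OddParts i × LargeDistinctEvens i ≃ ModFourParts i × DistinctEvens :=
  ((oddEquiv i).symm.prodCongr (Equiv.refl _)).trans
    ((Equiv.prodAssoc _ _ _).trans ((modFourEquiv i).prodCongr (evenSplitEquiv i)))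

theorem sum_pairEquiv (q : OddParts i × LargeDistinctEvens i) :
    (pairEquiv i q).1.1.sum + (pairEquiv i q).2.1.sum = q.1.1.sum + q.2.1.sum := by
  obtain ⟨l, μ⟩ := q
  obtain ⟨⟨b, s⟩, rfl⟩ := (oddEquiv i).surjective l
  simp only [pairEquiv, Equiv.trans_apply, Equiv.prodCongr_apply, Prod.map, Equiv.symm_apply_apply,
    Equiv.refl_apply, Equiv.prodAssoc_apply, evenSplitEquiv, Equiv.coe_fn_mk, sum_add, sum_oddEquiv]
  ring

end OddModFour

theorem stmt_18 (i n : ℕ) :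
    Nat.card {p : Multiset ℕ × Multiset ℕ //
        Multiset.card p.1 = i ∧ (∀ x ∈ p.1, Odd x) ∧
        (∀ x ∈ p.2, 0 < x ∧ 2 ∣ x ∧ 2 * i + 2 ≤ x) ∧ p.2.Nodup ∧
        p.1.sum + p.2.sum = n}
      = Nat.card {p : Multiset ℕ × Multiset ℕ //
          Multiset.card p.1 = i ∧ (∀ x ∈ p.1, x % 4 = 1) ∧
          (∀ x ∈ p.2, 0 < x ∧ 2 ∣ x) ∧ p.2.Nodup ∧
          p.1.sum + p.2.sum = n} :=
  let R (l μ : Multiset ℕ) : Prop := l.sum + μ.sum = n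
  Nat.card_congr <| (subtypeProdAndEquiv (R := R)).trans <|
    ((OddModFour.pairEquiv i).subtypeEquiv fun q => by
      simp only [R, OddModFour.sum_pairEquiv]).trans
      (subtypeProdAndEquiv (R := R)).symm
end

section
/- Fix an integer n ≥ 0. The number of triples (i, λ, μ) where i ≥ 0 is an integer, λ is a partition with either 2i or 2i − 1 parts in which every two consecutive parts (in increasing order) differ by at least 2 and, in the case of 2i − 1 parts, the smallest part is at least 2, μ is a partition into distinct parts with every part at least 2i + 1, and |λ| + |μ| = n, equals the number of pairs (β, γ) where β is a partition into distinct even parts, γ is a partition into distinct parts, and |β| + |γ| = n. -/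
/-!
Pad λ by a leading zero when it has 2i − 1 parts: it becomes x₁ < ⋯ < x_{2i} with gaps at least 2
and x₁ ≥ 0. Scan it upwards with a carry c, starting at 0 and raised by one at x_k exactly when
x_k − c is odd, and put b_k = x_k − c. The b_k are distinct even numbers, and a raise at position k
adds one to each of x_k, …, x_{2i}, so it accounts for 2i − k + 1 of the weight: the raises form a
set T ⊆ [1, 2i] with |λ| = Σ b_k + Σ T, and every pair (b, T) arises exactly once. As the parts of
μ exceed 2i, γ = T ∪ μ determines T and μ; β is b without its possible zero, and 2i is the number
of parts of β rounded up to an even number.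
-/

namespace GapPartition

open List

instance : Trans (fun a b : ℕ => a + 2 ≤ b) (fun a b : ℕ => a + 2 ≤ b) (fun a b : ℕ => a + 2 ≤ b) :=
  ⟨fun h₁ h₂ => by omega⟩

/- The scan with carry `c`: a raise at `x :: r` is recorded in `bumps` as `r.length + 1`, the
number of entries it shifts, and `addBumps T` reverses the scan by raising the carry wherever that
number lies in `T`. -/
def evenPart : ℕ → List ℕ → List ℕ
  | _, [] => []
  | c, x :: r => (x - (c + (x - c) % 2)) :: evenPart (c + (x - c) % 2) r

def bumps : ℕ → List ℕ → Multiset ℕ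
  | _, [] => 0
  | c, x :: r =>
    (if (x - c) % 2 = 1 then {r.length + 1} else 0) + bumps (c + (x - c) % 2) r

def addBumps (T : Multiset ℕ) : ℕ → List ℕ → List ℕ
  | _, [] => []
  | c, y :: r =>
    if r.length + 1 ∈ T then (y + c + 1) :: addBumps T (c + 1) r
    else (y + c) :: addBumps T c r

@[simp]
theorem length_evenPart (c : ℕ) (l : List ℕ) : (evenPart c l).length = l.length := by
  induction l generalizing c <;> simp [evenPart, *]

theorem two_dvd_of_mem_evenPart {c y : ℕ} {l : List ℕ} (hy : y ∈ evenPart c l) : 2 ∣ y := by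
  induction l generalizing c with
  | nil => simp [evenPart] at hy
  | cons x r ih =>
    rcases mem_cons.mp hy with rfl | hy
    · omega
    · exact ih hy

theorem head?_evenPart (c : ℕ) (l : List ℕ) :
    (evenPart c l).head? = l.head?.map fun x => x - (c + (x - c) % 2) := by
  cases l <;> rfl

theorem isChain_lt_evenPart {c : ℕ} {l : List ℕ} (hl : l.IsChain (· + 2 ≤ ·))
    (hc : ∀ x ∈ l.head?, c ≤ x) : (evenPart c l).IsChain (· < ·) := by
  induction l generalizing c with
  | nil => exact .nil
  | cons x r ih =>
    have hx := hc x rfl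
    rw [isChain_cons] at hl
    have hr : ∀ y ∈ r.head?, c + (x - c) % 2 ≤ y := fun y hy => by
      have := hl.1 y hy
      omega
    refine isChain_cons.mpr ⟨fun z hz => ?_, ih hl.2 hr⟩
    rw [head?_evenPart] at hz
    obtain ⟨y, hy, rfl⟩ := Option.mem_map.mp hz
    have := hl.1 y hy
    omega

theorem one_le_and_le_length_of_mem_bumps {c j : ℕ} {l : List ℕ} (hj : j ∈ bumps c l) :
    1 ≤ j ∧ j ≤ l.length := by
  induction l generalizing c with
  | nil => exact absurd hj (Multiset.notMem_zero _)
  | cons x r ih =>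
    rw [bumps, Multiset.mem_add] at hj
    rw [length_cons]
    rcases hj with hj | hj
    · split_ifs at hj
      · rw [Multiset.mem_singleton.mp hj]
        omega
      · exact absurd hj (Multiset.notMem_zero _)
    · have := ih hj
      omega

theorem nodup_bumps (c : ℕ) (l : List ℕ) : (bumps c l).Nodup := by
  induction l generalizing c with
  | nil => exact Multiset.nodup_zero
  | cons x r ih =>
    rw [bumps, Multiset.nodup_add]
    refine ⟨?_, ih _, Multiset.disjoint_left.mpr fun hj hj' => ?_⟩
    · split_ifs <;> simp
    · have := (one_le_and_le_length_of_mem_bumps hj').2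
      split_ifs at hj
      · rw [Multiset.mem_singleton.mp hj] at this
        omega
      · exact Multiset.notMem_zero _ hj

theorem sum_evenPart_add_sum_bumps {c : ℕ} {l : List ℕ} (hl : l.IsChain (· + 2 ≤ ·))
    (hc : ∀ x ∈ l.head?, c ≤ x) :
    (evenPart c l).sum + (bumps c l).sum + c * l.length = l.sum := by
  induction l generalizing c with
  | nil => simp [evenPart, bumps]
  | cons x r ih =>
    have hx := hc x rfl
    rw [isChain_cons] at hl
    have hr : ∀ y ∈ r.head?, c + (x - c) % 2 ≤ y := fun y hy => by
      have := hl.1 y hy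
      omega
    have := ih hl.2 hr
    simp only [evenPart, bumps, sum_cons, Multiset.sum_add, length_cons]
    split_ifs with h
    · simp only [h, Multiset.sum_singleton, add_mul, mul_add] at this ⊢
      omega
    · have h0 : (x - c) % 2 = 0 := by omega
      simp only [h0, add_zero, Multiset.sum_zero, mul_add] at this ⊢
      omega

@[simp]
theorem length_addBumps (T : Multiset ℕ) (c : ℕ) (b : List ℕ) :
    (addBumps T c b).length = b.length := by
  induction b generalizing c with
  | nil => rfl
  | cons y r ih => simp only [addBumps]; split_ifs <;> simp [ih]

theorem head?_addBumps (T : Multiset ℕ) (c : ℕ) (b : List ℕ) :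
    (addBumps T c b).head? = b.head?.map fun y => y + c + if b.length ∈ T then 1 else 0 := by
  cases b with
  | nil => rfl
  | cons y r => simp only [addBumps, length_cons]; split_ifs <;> simp

theorem isChain_addBumps (T : Multiset ℕ) (c : ℕ) {b : List ℕ} (hb : b.IsChain (· + 2 ≤ ·)) :
    (addBumps T c b).IsChain (· + 2 ≤ ·) := by
  induction b generalizing c with
  | nil => exact .nil
  | cons y r ih =>
    rw [isChain_cons] at hb
    have hhead : ∀ c', ∀ z ∈ (addBumps T c' r).head?, y + c' + 2 ≤ z := fun c' z hz => by
      rw [head?_addBumps] at hz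
      obtain ⟨y', hy', rfl⟩ := Option.mem_map.mp hz
      have := hb.1 y' hy'
      omega
    simp only [addBumps]
    split_ifs
    · exact isChain_cons.mpr ⟨hhead (c + 1), ih (c + 1) hb.2⟩
    · exact isChain_cons.mpr ⟨fun z hz => by have := hhead c z hz; omega, ih c hb.2⟩

theorem evenPart_addBumps (T : Multiset ℕ) (c : ℕ) {b : List ℕ} (hb : ∀ y ∈ b, 2 ∣ y) :
    evenPart c (addBumps T c b) = b := by
  induction b generalizing c with
  | nil => rfl
  | cons y r ih =>
    have hy := hb y mem_cons_self
    have hr := fun z hz => hb z (mem_cons_of_mem y hz)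
    simp only [addBumps]
    split_ifs
    · rw [evenPart, show (y + c + 1 - c) % 2 = 1 by omega, ih (c + 1) hr]
      congr 1
      omega
    · rw [evenPart, show (y + c - c) % 2 = 0 by omega, add_zero, ih c hr]
      congr 1
      omega

theorem mem_bumps_addBumps {T : Multiset ℕ} {c : ℕ} {b : List ℕ} (hb : ∀ y ∈ b, 2 ∣ y)
    (j : ℕ) : j ∈ bumps c (addBumps T c b) ↔ j ∈ T ∧ 1 ≤ j ∧ j ≤ b.length := by
  induction b generalizing c with
  | nil =>
    simp only [addBumps, bumps, length_nil, Multiset.notMem_zero, false_iff]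
    rintro ⟨-, h₁, h₂⟩
    omega
  | cons y r ih =>
    have hy := hb y mem_cons_self
    have hr := fun z hz => hb z (mem_cons_of_mem y hz)
    simp only [addBumps, length_cons]
    split_ifs with hT
    · rw [bumps, show (y + c + 1 - c) % 2 = 1 by omega, if_pos rfl, Multiset.mem_add,
        ih hr, length_addBumps, Multiset.mem_singleton]
      constructor
      · rintro (rfl | ⟨h₁, h₂, h₃⟩)
        · exact ⟨hT, by omega, le_rfl⟩
        · exact ⟨h₁, h₂, by omega⟩
      · rintro ⟨h₁, h₂, h₃⟩
        rcases h₃.lt_or_eq with h₃ | h₃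
        · exact Or.inr ⟨h₁, h₂, by omega⟩
        · exact Or.inl h₃
    · rw [bumps, show (y + c - c) % 2 = 0 by omega, add_zero, if_neg (by omega), zero_add,
        ih hr]
      constructor
      · rintro ⟨h₁, h₂, h₃⟩
        exact ⟨h₁, h₂, by omega⟩
      · rintro ⟨h₁, h₂, h₃⟩
        rcases h₃.lt_or_eq with h₃ | rfl
        · exact ⟨h₁, h₂, by omega⟩
        · exact absurd h₁ hT

theorem addBumps_evenPart {c : ℕ} {l : List ℕ} (hl : l.IsChain (· + 2 ≤ ·))
    (hc : ∀ x ∈ l.head?, c ≤ x) {M : Multiset ℕ} (hM : ∀ j ∈ M, l.length < j) :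
    addBumps (bumps c l + M) c (evenPart c l) = l := by
  induction l generalizing c M with
  | nil => rfl
  | cons x r ih =>
    have hx := hc x rfl
    rw [isChain_cons] at hl
    have hr : ∀ y ∈ r.head?, c + (x - c) % 2 ≤ y := fun y hy => by
      have := hl.1 y hy
      omega
    have hM' : ∀ j ∈ M, r.length + 1 < j := hM
    have hnot : r.length + 1 ∉ bumps (c + (x - c) % 2) r + M := by
      rw [Multiset.mem_add, not_or]
      exact ⟨fun h => by have := (one_le_and_le_length_of_mem_bumps h).2; omega,
        fun h => (hM' _ h).false⟩
    rcases Nat.mod_two_eq_zero_or_one (x - c) with h | h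
    · rw [h, add_zero] at hr hnot
      simp only [bumps, evenPart, addBumps, length_evenPart, h, add_zero, zero_ne_one,
        if_false, zero_add, if_neg hnot]
      rw [ih hl.2 hr fun j hj => (hM' j hj).le]
      congr 1
      omega
    · rw [h] at hr
      simp only [bumps, evenPart, addBumps, length_evenPart, h, if_true, Multiset.mem_add,
        Multiset.mem_singleton, true_or]
      rw [add_comm {_}, add_assoc (bumps _ _), ih hl.2 hr]
      · congr 1
        omega
      · intro j hj
        rcases Multiset.mem_add.mp hj with hj | hj
        · rw [Multiset.mem_singleton.mp hj]
          exact Nat.lt_succ_self _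
        · exact (hM' j hj).le

theorem isChain_add_two_of_two_dvd {B : List ℕ} (hB : B.IsChain (· < ·)) (he : ∀ x ∈ B, 2 ∣ x) :
    B.IsChain (· + 2 ≤ ·) :=
  hB.imp_of_mem_imp fun a b ha hb hab => by
    have := he a ha
    have := he b hb
    omega

theorem bumps_addBumps_add_filter {T : Multiset ℕ} {c : ℕ} {b : List ℕ}
    (hb : ∀ y ∈ b, 2 ∣ y) (hT : ∀ j ∈ T, 0 < j) (hnd : T.Nodup) :
    bumps c (addBumps T c b) + T.filter (b.length < ·) = T := by
  have h : bumps c (addBumps T c b) = T.filter fun j => ¬b.length < j := by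
    refine (Multiset.Nodup.ext (nodup_bumps _ _) (hnd.filter _)).mpr fun j => ?_
    rw [mem_bumps_addBumps hb, Multiset.mem_filter, not_lt]
    exact ⟨fun h => ⟨h.1, h.2.2⟩, fun h => ⟨h.1, hT j h.1, h.2⟩⟩
  rw [h, add_comm, Multiset.filter_add_not]

theorem sum_filter_pos (L : List ℕ) : (L.filter (0 < ·)).sum = L.sum := by
  induction L with
  | nil => rfl
  | cons x r ih => rcases x.eq_zero_or_pos with rfl | hx <;> simp [*]

theorem filter_pos_eq_self_or {L : List ℕ} (hL : L.IsChain (· < ·)) :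
    L.filter (0 < ·) = L ∨ L = 0 :: L.filter (0 < ·) := by
  cases L with
  | nil => exact Or.inl rfl
  | cons x r =>
    have hr : r.filter (0 < ·) = r :=
      filter_eq_self.mpr fun y hy => by
        simpa using ((pairwise_cons.mp (isChain_iff_pairwise.mp hL)).1 y hy).trans_le' x.zero_le
    rcases x.eq_zero_or_pos with rfl | hx <;> simp [*]

theorem sort_coe_filter_pos {L : List ℕ} (hL : L.IsChain (· < ·)) :
    ((L.filter (0 < ·) : List ℕ) : Multiset ℕ).sort (· ≤ ·) = L.filter (0 < ·) :=
  mergeSort_eq_self _ ((isChain_iff_pairwise.mp hL).sublist filter_sublist |>.imp le_of_lt)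

def zeroPad (s : Multiset ℕ) : List ℕ :=
  if Even (Multiset.card s) then s.sort (· ≤ ·) else 0 :: s.sort (· ≤ ·)

theorem length_zeroPad (s : Multiset ℕ) :
    (zeroPad s).length = 2 * ((Multiset.card s + 1) / 2) := by
  unfold zeroPad
  split_ifs with h <;> rw [Nat.even_iff] at h <;>
    simp only [length_cons, Multiset.length_sort] <;> omega

theorem sum_zeroPad (s : Multiset ℕ) : (zeroPad s).sum = s.sum := by
  have h : (s.sort (· ≤ ·)).sum = s.sum := by rw [← Multiset.sum_coe, Multiset.sort_eq]
  unfold zeroPad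
  split_ifs <;> simp [h]

theorem filter_zeroPad {s : Multiset ℕ} (hs : ∀ x ∈ s, 0 < x) :
    (zeroPad s).filter (0 < ·) = s.sort (· ≤ ·) := by
  have h : (s.sort (· ≤ ·)).filter (0 < ·) = s.sort (· ≤ ·) :=
    filter_eq_self.mpr fun x hx => by simpa using hs x ((Multiset.mem_sort _).mp hx)
  unfold zeroPad
  split_ifs <;> simp [h]

theorem isChain_add_two_zeroPad {s : Multiset ℕ} (hs : (s.sort (· ≤ ·)).IsChain (· + 2 ≤ ·))
    (hodd : ¬Even (Multiset.card s) → ∀ x ∈ s, 2 ≤ x) : (zeroPad s).IsChain (· + 2 ≤ ·) := by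
  unfold zeroPad
  split_ifs with h
  · exact hs
  · exact isChain_cons.mpr
      ⟨fun y hy => hodd h y ((Multiset.mem_sort _).mp (mem_of_mem_head? hy)), hs⟩

theorem isChain_lt_zeroPad {s : Multiset ℕ} (hs : ∀ x ∈ s, 0 < x) (hnd : s.Nodup) :
    (zeroPad s).IsChain (· < ·) := by
  have hsortnd : (s.sort (· ≤ ·)).Nodup := by rwa [← Multiset.coe_nodup, Multiset.sort_eq]
  have hsort : (s.sort (· ≤ ·)).Pairwise (· < ·) :=
    ((Multiset.pairwise_sort _ _).and hsortnd).imp fun h => lt_of_le_of_ne h.1 h.2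
  unfold zeroPad
  split_ifs
  · exact isChain_iff_pairwise.mpr hsort
  · exact isChain_iff_pairwise.mpr
      (pairwise_cons.mpr ⟨fun x hx => hs x ((Multiset.mem_sort _).mp hx), hsort⟩)

theorem two_dvd_of_mem_zeroPad {s : Multiset ℕ} (hs : ∀ x ∈ s, 2 ∣ x) {x : ℕ}
    (hx : x ∈ zeroPad s) : 2 ∣ x := by
  unfold zeroPad at hx
  split_ifs at hx
  · exact hs x ((Multiset.mem_sort _).mp hx)
  · rcases mem_cons.mp hx with rfl | hx
    · exact dvd_zero 2
    · exact hs x ((Multiset.mem_sort _).mp hx)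

theorem zeroPad_coe_filter {L : List ℕ} (hL : L.IsChain (· < ·)) (he : Even L.length) :
    zeroPad (L.filter (0 < ·)) = L := by
  unfold zeroPad
  rw [Multiset.coe_card, sort_coe_filter_pos hL]
  rcases filter_pos_eq_self_or hL with h | h
  · rw [h, if_pos he]
  · rw [h, length_cons, Nat.even_add_one] at he
    rw [if_neg he, ← h]

def gapTriples (n : ℕ) : Set (ℕ × Multiset ℕ × Multiset ℕ) :=
  {t | (∀ x ∈ t.2.1, 0 < x) ∧
    (Multiset.sort t.2.1 (· ≤ ·)).IsChain (fun a b => a + 2 ≤ b) ∧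
    (Multiset.card t.2.1 = 2 * t.1 ∨
      (Multiset.card t.2.1 + 1 = 2 * t.1 ∧ ∀ x ∈ t.2.1, 2 ≤ x)) ∧
    (∀ x ∈ t.2.2, 2 * t.1 + 1 ≤ x) ∧ t.2.2.Nodup ∧
    t.2.1.sum + t.2.2.sum = n}

def gapPairs (n : ℕ) : Set (List ℕ × Multiset ℕ) :=
  {p | p.1.IsChain (· + 2 ≤ ·) ∧ Even p.1.length ∧ (∀ x ∈ p.2, p.1.length < x) ∧ p.2.Nodup ∧
    p.1.sum + p.2.sum = n}

def evenPairs (n : ℕ) : Set (List ℕ × Multiset ℕ) :=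
  {p | p.1.IsChain (· < ·) ∧ (∀ x ∈ p.1, 2 ∣ x) ∧ Even p.1.length ∧ (∀ x ∈ p.2, 0 < x) ∧
    p.2.Nodup ∧ p.1.sum + p.2.sum = n}

def distinctPairs (n : ℕ) : Set (Multiset ℕ × Multiset ℕ) :=
  {p | (∀ x ∈ p.1, 0 < x ∧ 2 ∣ x) ∧ p.1.Nodup ∧ (∀ x ∈ p.2, 0 < x) ∧ p.2.Nodup ∧
    p.1.sum + p.2.sum = n}

theorem bijOn_gapTriples_gapPairs (n : ℕ) :
    Set.BijOn (fun t => (zeroPad t.2.1, t.2.2)) (gapTriples n) (gapPairs n) := by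
  refine Set.InvOn.bijOn (f' := fun p => (p.1.length / 2, (p.1.filter (0 < ·) : Multiset ℕ), p.2))
    ⟨?_, ?_⟩ ?_ ?_
  · rintro ⟨i, s, M⟩ ⟨hpos, -, hcard, -⟩
    have := length_zeroPad s
    dsimp only at hpos hcard ⊢
    simp only [Prod.mk.injEq, filter_zeroPad hpos, Multiset.sort_eq, and_true]
    omega
  · rintro ⟨L, M⟩ ⟨hL, he, -⟩
    simp [zeroPad_coe_filter (hL.imp fun _ _ h => by omega) he]
  · rintro ⟨i, s, M⟩ ⟨hpos, hchain, hcard, hM, hnd, hsum⟩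
    dsimp only at *
    have hlen := length_zeroPad s
    refine ⟨isChain_add_two_zeroPad hchain fun h => ?_, hlen ▸ even_two_mul _,
      fun x hx => by have := hM x hx; dsimp only; omega, hnd, by simpa [sum_zeroPad] using hsum⟩
    rcases hcard with hcard | hcard
    · exact absurd ⟨i, by omega⟩ h
    · exact hcard.2
  · rintro ⟨L, M⟩ ⟨hL, he, hM, hnd, hsum⟩
    dsimp only at *
    rw [Nat.even_iff] at he
    refine ⟨fun x hx => by simpa using (mem_filter.mp hx).2, ?_, ?_,
      fun x hx => by have := hM x hx; omega, hnd, by simpa [sum_filter_pos] using hsum⟩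
    · rw [sort_coe_filter_pos (hL.imp fun _ _ h => by omega)]
      exact hL.sublist filter_sublist
    · rcases filter_pos_eq_self_or (hL.imp fun _ _ h => by omega) with h | h
      · left
        simp only [Multiset.coe_card, h]
        omega
      · right
        have hlen := congrArg length h
        rw [length_cons] at hlen
        refine ⟨by rw [Multiset.coe_card]; omega, fun x hx => ?_⟩
        rw [h] at hL
        exact (pairwise_cons.mp (isChain_iff_pairwise.mp hL)).1 x hx

theorem bijOn_gapPairs_evenPairs (n : ℕ) :
    Set.BijOn (fun p => (evenPart 0 p.1, bumps 0 p.1 + p.2)) (gapPairs n) (evenPairs n) := by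
  have hc : ∀ l : List ℕ, ∀ x ∈ l.head?, 0 ≤ x := fun _ x _ => x.zero_le
  refine Set.InvOn.bijOn (f' := fun p => (addBumps p.2 0 p.1, p.2.filter (p.1.length < ·)))
    ⟨?_, ?_⟩ ?_ ?_
  · rintro ⟨L, M⟩ ⟨hL, -, hM, -⟩
    refine Prod.ext (addBumps_evenPart hL (hc L) hM) ?_
    dsimp only at hM ⊢
    rw [length_evenPart, Multiset.filter_add, Multiset.filter_eq_nil.mpr,
      Multiset.filter_eq_self.mpr hM, zero_add]
    intro j hj
    simpa using (one_le_and_le_length_of_mem_bumps hj).2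
  · rintro ⟨B, G⟩ ⟨-, he, -, hpos, hnd, -⟩
    exact Prod.ext (evenPart_addBumps G 0 he) (bumps_addBumps_add_filter he hpos hnd)
  · rintro ⟨L, M⟩ ⟨hL, he, hM, hnd, hsum⟩
    dsimp only at *
    have := sum_evenPart_add_sum_bumps hL (hc L)
    refine ⟨isChain_lt_evenPart hL (hc L), fun y => two_dvd_of_mem_evenPart,
      by simpa using he, fun j hj => ?_, ?_, by simp only [Multiset.sum_add]; omega⟩
    · rcases Multiset.mem_add.mp hj with hj | hj
      · exact (one_le_and_le_length_of_mem_bumps hj).1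
      · exact (Nat.zero_le _).trans_lt (hM j hj)
    · refine Multiset.nodup_add.mpr ⟨nodup_bumps _ _, hnd, Multiset.disjoint_left.mpr ?_⟩
      intro j hj hjM
      have := (one_le_and_le_length_of_mem_bumps hj).2
      have := hM j hjM
      omega
  · rintro ⟨B, G⟩ ⟨hB, he, hlen, hpos, hnd, hsum⟩
    have hgap := isChain_add_two_of_two_dvd hB he
    have hL := sum_evenPart_add_sum_bumps (isChain_addBumps G 0 hgap) (hc _)
    have hG := congrArg Multiset.sum (bumps_addBumps_add_filter (c := 0) he hpos hnd)
    rw [evenPart_addBumps G 0 he, Multiset.sum_add] at *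
    refine ⟨isChain_addBumps G 0 hgap, by simpa using hlen,
      fun x hx => by simpa using (Multiset.mem_filter.mp hx).2, hnd.filter _, ?_⟩
    dsimp only at *
    omega

theorem bijOn_evenPairs_distinctPairs (n : ℕ) :
    Set.BijOn (fun p => ((p.1.filter (0 < ·) : Multiset ℕ), p.2)) (evenPairs n)
      (distinctPairs n) := by
  refine Set.InvOn.bijOn (f' := fun p => (zeroPad p.1, p.2)) ⟨?_, ?_⟩ ?_ ?_
  · rintro ⟨B, G⟩ ⟨hB, -, he, -⟩
    simp [zeroPad_coe_filter hB he]
  · rintro ⟨β, G⟩ ⟨hβ, -⟩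
    simp [filter_zeroPad fun x hx => (hβ x hx).1]
  · rintro ⟨B, G⟩ ⟨hB, he, -, hpos, hnd, hsum⟩
    refine ⟨fun x hx => ?_, ?_, hpos, hnd, by simpa [sum_filter_pos] using hsum⟩
    · obtain ⟨hxB, hx0⟩ := mem_filter.mp (Multiset.mem_coe.mp hx)
      exact ⟨by simpa using hx0, he x hxB⟩
    · exact Multiset.coe_nodup.mpr ((isChain_iff_pairwise.mp hB).nodup.filter _)
  · rintro ⟨β, G⟩ ⟨hβ, hnd, hpos, hGnd, hsum⟩
    exact ⟨isChain_lt_zeroPad (fun x hx => (hβ x hx).1) hnd,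
      fun x => two_dvd_of_mem_zeroPad fun x hx => (hβ x hx).2, length_zeroPad β ▸ even_two_mul _,
      hpos, hGnd, by simpa [sum_zeroPad] using hsum⟩

end GapPartition

theorem stmt_19 (n : ℕ) :
    Nat.card {t : ℕ × Multiset ℕ × Multiset ℕ //
        (∀ x ∈ t.2.1, 0 < x) ∧
        List.Chain' (fun a b => a + 2 ≤ b) (Multiset.sort t.2.1 (· ≤ ·)) ∧
        (Multiset.card t.2.1 = 2 * t.1 ∨
          (Multiset.card t.2.1 + 1 = 2 * t.1 ∧ ∀ x ∈ t.2.1, 2 ≤ x)) ∧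
        (∀ x ∈ t.2.2, 2 * t.1 + 1 ≤ x) ∧ t.2.2.Nodup ∧
        t.2.1.sum + t.2.2.sum = n}
      = Nat.card {p : Multiset ℕ × Multiset ℕ //
          (∀ x ∈ p.1, 0 < x ∧ 2 ∣ x) ∧ p.1.Nodup ∧
          (∀ x ∈ p.2, 0 < x) ∧ p.2.Nodup ∧
          p.1.sum + p.2.sum = n} := by
  have h := (GapPartition.bijOn_evenPairs_distinctPairs n).comp
    ((GapPartition.bijOn_gapPairs_evenPairs n).comp (GapPartition.bijOn_gapTriples_gapPairs n))
  exact Nat.card_congr (h.equiv _)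
end
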